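/- On H×ℂ* with coordinates (z,w), z = x+iy, the metric ω₀ = (4/|w|²)√-1 dw∧dw̄ + (2/y²)√-1 dz∧dz̄ + (2i/(yw))√-1 dw∧dz̄ - (2i/(yw̄))√-1 dz∧dw̄ satisfies det(g₀) = 4/(y²|w|²), is positive definite, and Ric(ω₀) = -(1/(2y²))√-1 dz∧dz̄. -/

import Mathlib

open Complex
open scoped ComplexOrder

/-- Wirtinger derivative `∂/∂z_i` (i = 0 is `z`, i = 1 is `w`) on `ℂ × ℂ`. -/
noncomputable def wd (i : Fin 2) (f : ℂ × ℂ → ℂ) (p : ℂ × ℂ) : ℂ :=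
  if i = 0 then (fderiv ℝ f p (1, 0) - Complex.I * fderiv ℝ f p (Complex.I, 0)) / 2
  else (fderiv ℝ f p (0, 1) - Complex.I * fderiv ℝ f p (0, Complex.I)) / 2

/-- Wirtinger derivative `∂/∂z̄_i` on `ℂ × ℂ`. -/
noncomputable def wdb (i : Fin 2) (f : ℂ × ℂ → ℂ) (p : ℂ × ℂ) : ℂ :=
  if i = 0 then (fderiv ℝ f p (1, 0) + Complex.I * fderiv ℝ f p (Complex.I, 0)) / 2
  else (fderiv ℝ f p (0, 1) + Complex.I * fderiv ℝ f p (0, Complex.I)) / 2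

/-- The coefficient matrix of the Vaisman metric
`ω₀ = (4/|w|²)√-1 dw∧dw̄ + (2/y²)√-1 dz∧dz̄ + (2i/(yw))√-1 dw∧dz̄ - (2i/(yw̄))√-1 dz∧dw̄`
on `H×ℂ*` (index 0 = `z`, index 1 = `w`). -/
noncomputable def gV (p : ℂ × ℂ) : Matrix (Fin 2) (Fin 2) ℂ :=
  !![((2 / p.1.im ^ 2 : ℝ) : ℂ), -2 * Complex.I / ((p.1.im : ℂ) * (starRingEnd ℂ) p.2);
     2 * Complex.I / ((p.1.im : ℂ) * p.2), ((4 / Complex.normSq p.2 : ℝ) : ℂ)]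

/-!
Completing the square in the `z`-direction writes `g₀ = Cᴴ diag(2, 2/|w|²) C` with
`C = !![1/y, -i/w̄; 0, 1]`; since `det C = 1/y ≠ 0`, this gives both `det g₀ = 4/(y²|w|²)` and
positive definiteness.

Near any point of `H×ℂ*`, `log det g₀ = (log 4 - 2 log y) - log |w|²` is a function of `z` minus a
function of `w`, so `∂/∂z̄ log det g₀ = -i/y` and `∂/∂w̄ log det g₀ = -1/w̄` there. Differentiating
once more, `∂/∂z (-i/y) = 1/(2y²)`, while `-i/y` does not depend on `w` and `-1/w̄` does not depend
on `z` and is antiholomorphic in `w`, which kills the remaining three coefficients.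
-/

open Filter Topology Matrix

noncomputable def dz (φ : ℂ → ℂ) (z : ℂ) : ℂ := (fderiv ℝ φ z 1 - I * fderiv ℝ φ z I) / 2

noncomputable def dzb (φ : ℂ → ℂ) (z : ℂ) : ℂ := (fderiv ℝ φ z 1 + I * fderiv ℝ φ z I) / 2

section Wirtinger

variable {f g : ℂ × ℂ → ℂ} {p : ℂ × ℂ}

lemma Filter.EventuallyEq.wd_eq (h : f =ᶠ[𝓝 p] g) (i : Fin 2) : wd i f p = wd i g p := by
  simp only [wd, h.fderiv_eq]

lemma Filter.EventuallyEq.wdb_eq (h : f =ᶠ[𝓝 p] g) (i : Fin 2) : wdb i f p = wdb i g p := by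
  simp only [wdb, h.fderiv_eq]

lemma wdb_sub (hf : DifferentiableAt ℝ f p) (hg : DifferentiableAt ℝ g p) (i : Fin 2) :
    wdb i (fun q => f q - g q) p = wdb i f p - wdb i g p := by
  rw [wdb, wdb, wdb, fderiv_fun_sub hf hg]
  split_ifs <;> simp only [_root_.sub_apply] <;> ring

lemma fderiv_comp_fst {φ : ℂ → ℂ} (hφ : DifferentiableAt ℝ φ p.1) :
    fderiv ℝ (fun q : ℂ × ℂ => φ q.1) p =
      (fderiv ℝ φ p.1).comp (ContinuousLinearMap.fst ℝ ℂ ℂ) :=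
  (hφ.hasFDerivAt.comp p hasFDerivAt_fst).fderiv

lemma fderiv_comp_snd {ψ : ℂ → ℂ} (hψ : DifferentiableAt ℝ ψ p.2) :
    fderiv ℝ (fun q : ℂ × ℂ => ψ q.2) p =
      (fderiv ℝ ψ p.2).comp (ContinuousLinearMap.snd ℝ ℂ ℂ) :=
  (hψ.hasFDerivAt.comp p hasFDerivAt_snd).fderiv

lemma wd_comp_fst {φ : ℂ → ℂ} (hφ : DifferentiableAt ℝ φ p.1) (i : Fin 2) :
    wd i (fun q => φ q.1) p = if i = 0 then dz φ p.1 else 0 := by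
  fin_cases i <;> simp [wd, dz, fderiv_comp_fst hφ]

lemma wdb_comp_fst {φ : ℂ → ℂ} (hφ : DifferentiableAt ℝ φ p.1) (i : Fin 2) :
    wdb i (fun q => φ q.1) p = if i = 0 then dzb φ p.1 else 0 := by
  fin_cases i <;> simp [wdb, dzb, fderiv_comp_fst hφ]

lemma wd_comp_snd {ψ : ℂ → ℂ} (hψ : DifferentiableAt ℝ ψ p.2) (i : Fin 2) :
    wd i (fun q => ψ q.2) p = if i = 0 then 0 else dz ψ p.2 := by
  fin_cases i <;> simp [wd, dz, fderiv_comp_snd hψ]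

lemma wdb_comp_snd {ψ : ℂ → ℂ} (hψ : DifferentiableAt ℝ ψ p.2) (i : Fin 2) :
    wdb i (fun q => ψ q.2) p = if i = 0 then 0 else dzb ψ p.2 := by
  fin_cases i <;> simp [wdb, dzb, fderiv_comp_snd hψ]

end Wirtinger

section OneVariable

variable {z : ℂ}

lemma hasFDerivAt_comp_im {h : ℝ → ℂ} {h' : ℂ} (hh : HasDerivAt h h' z.im) :
    HasFDerivAt (fun z : ℂ => h z.im) (imCLM.smulRight h') z :=
  (hh.hasFDerivAt.comp z imCLM.hasFDerivAt).congr_fderiv (by ext; simp)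

lemma dz_comp_im {h : ℝ → ℂ} {h' : ℂ} (hh : HasDerivAt h h' z.im) :
    dz (fun z => h z.im) z = -I * h' / 2 := by
  simp [dz, (hasFDerivAt_comp_im hh).fderiv]

lemma dzb_comp_im {h : ℝ → ℂ} {h' : ℂ} (hh : HasDerivAt h h' z.im) :
    dzb (fun z => h z.im) z = I * h' / 2 := by
  simp [dzb, (hasFDerivAt_comp_im hh).fderiv]

lemma hasFDerivAt_ofReal_log_normSq (hz : z ≠ 0) :
    HasFDerivAt (fun z => ((Real.log (normSq z) : ℝ) : ℂ))
      (ofRealCLM.comp ((normSq z)⁻¹ • 2 • innerSL ℝ z)) z := by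
  have h := (hasStrictFDerivAt_norm_sq z).hasFDerivAt
  simp only [← Complex.normSq_eq_norm_sq] at h
  exact ofRealCLM.hasFDerivAt.comp z
    ((Real.hasDerivAt_log (normSq_pos.2 hz).ne').comp_hasFDerivAt z h)

lemma dzb_log_normSq (hz : z ≠ 0) :
    dzb (fun z => ((Real.log (normSq z) : ℝ) : ℂ)) z = (starRingEnd ℂ z)⁻¹ := by
  have hz' : starRingEnd ℂ z ≠ 0 := by simpa using hz
  rw [dzb, (hasFDerivAt_ofReal_log_normSq hz).fderiv]
  simp only [ContinuousLinearMap.comp_apply, ContinuousLinearMap.comp_smulₛₗ, map_inv₀,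
    Real.ringHom_apply, ContinuousLinearMap.comp_smul, nsmul_eq_mul, Nat.cast_ofNat,
    _root_.smul_apply, mul_apply_eq_comp, coe_innerSL_apply, Complex.inner, one_mul, conj_re,
    ofRealCLM_apply, ContinuousLinearMap.ofNat_apply, real_smul, ofReal_inv, mul_re, I_re,
    zero_mul, I_im, conj_im, mul_neg, sub_neg_eq_add, zero_add]
  rw [← mul_conj z]
  field_simp
  linear_combination re_add_im z

lemma dz_comp_conj {g : ℂ → ℂ} (hg : DifferentiableAt ℂ g (starRingEnd ℂ z)) :
    dz (fun z => g (starRingEnd ℂ z)) z = 0 := by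
  have h : HasFDerivAt (fun z => g (starRingEnd ℂ z))
      (((fderiv ℂ g (starRingEnd ℂ z)).restrictScalars ℝ).comp conjCLE.toContinuousLinearMap) z :=
    (hg.hasFDerivAt.restrictScalars ℝ).comp z conjCLE.hasFDerivAt
  rw [dz, h.fderiv]
  simp only [ContinuousLinearMap.comp_apply, ContinuousLinearEquiv.coe_coe,
    ContinuousAlgEquiv.coeCLE_apply, conjCAE_apply, map_one,
    ContinuousLinearMap.coe_restrictScalars', fderiv_eq_smul_deriv, smul_eq_mul, one_mul, conj_I,
    neg_mul, mul_neg, sub_neg_eq_add, div_eq_zero_iff, OfNat.ofNat_ne_zero, or_false]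
  linear_combination deriv g (starRingEnd ℂ z) * I_sq

end OneVariable

section Metric

variable {p : ℂ × ℂ}

noncomputable def gVFactor (p : ℂ × ℂ) : Matrix (Fin 2) (Fin 2) ℂ :=
  !![((p.1.im⁻¹ : ℝ) : ℂ), -I / starRingEnd ℂ p.2; 0, 1]

noncomputable def gVWeight (p : ℂ × ℂ) : Matrix (Fin 2) (Fin 2) ℂ :=
  diagonal ![2, ((2 / normSq p.2 : ℝ) : ℂ)]

lemma gV_eq_conjTranspose_mul_mul (hy : p.1.im ≠ 0) (hw : p.2 ≠ 0) :
    gV p = (gVFactor p)ᴴ * gVWeight p * gVFactor p := by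
  have hy' : (p.1.im : ℂ) ≠ 0 := by exact_mod_cast hy
  have hN : ((normSq p.2 : ℝ) : ℂ) ≠ 0 := by exact_mod_cast (normSq_pos.2 hw).ne'
  have hw' : starRingEnd ℂ p.2 ≠ 0 := by simpa using hw
  ext i j
  fin_cases i <;> fin_cases j <;>
    simp [gV, gVFactor, gVWeight, conjTranspose_apply, mul_apply, Fin.sum_univ_two] <;>
    field_simp
  linear_combination 2 * mul_conj p.2 + 2 * ((normSq p.2 : ℝ) : ℂ) * I_sq

lemma det_gVFactor : (gVFactor p).det = ((p.1.im⁻¹ : ℝ) : ℂ) := by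
  simp [gVFactor, det_fin_two_of]

lemma gV_det (hy : p.1.im ≠ 0) (hw : p.2 ≠ 0) :
    (gV p).det = ((4 / (p.1.im ^ 2 * normSq p.2) : ℝ) : ℂ) := by
  rw [gV_eq_conjTranspose_mul_mul hy hw, det_mul, det_mul, det_conjTranspose, det_gVFactor]
  simp only [ofReal_inv, star_inv₀, RCLike.star_def, conj_ofReal, gVWeight, ofReal_div,
    ofReal_ofNat, det_diagonal, Fin.prod_univ_two, Fin.isValue, cons_val_zero, cons_val_one,
    cons_val_fin_one, ofReal_mul, ofReal_pow]
  field_simp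
  ring

lemma gV_posDef (hy : p.1.im ≠ 0) (hw : p.2 ≠ 0) : (gV p).PosDef := by
  rw [gV_eq_conjTranspose_mul_mul hy hw]
  refine PosDef.conjTranspose_mul_mul_same (PosDef.diagonal fun i => ?_)
    (mulVec_injective_of_isUnit ?_)
  · have hN := normSq_pos.2 hw
    fin_cases i <;> simp [hN]
  · simp [isUnit_iff_isUnit_det, det_gVFactor, hy]

end Metric
noncomputable def logDetV (q : ℂ × ℂ) : ℂ :=
  ((Real.log (4 / (q.1.im ^ 2 * Complex.normSq q.2)) : ℝ) : ℂ)

section LogDet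

variable {p : ℂ × ℂ}

lemma hasDerivAt_log_four_sub {t : ℝ} (ht : t ≠ 0) :
    HasDerivAt (fun t : ℝ => ((Real.log 4 - 2 * Real.log t : ℝ) : ℂ)) (-2 / t : ℂ) t := by
  have h : HasDerivAt (fun t => Real.log 4 - 2 * Real.log t) (-2 / t) t := by
    simpa [div_eq_mul_inv] using (Real.hasDerivAt_log ht).const_mul 2 |>.const_sub (Real.log 4)
  exact_mod_cast h.ofReal_comp

lemma hasDerivAt_neg_I_div {t : ℝ} (ht : t ≠ 0) :
    HasDerivAt (fun t : ℝ => -I / (t : ℂ)) (I / t ^ 2 : ℂ) t := by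
  have h := ((hasDerivAt_inv (ofReal_ne_zero.2 ht)).comp_ofReal).const_mul (-I)
  simpa [div_eq_mul_inv] using h

lemma eventually_im_ne_zero_and_snd_ne_zero (hy : p.1.im ≠ 0) (hw : p.2 ≠ 0) :
    ∀ᶠ q in 𝓝 p, q.1.im ≠ 0 ∧ q.2 ≠ 0 :=
  ((continuous_im.comp continuous_fst).continuousAt.eventually_ne hy).and
    (continuous_snd.continuousAt.eventually_ne hw)

lemma logDetV_eventuallyEq (hy : p.1.im ≠ 0) (hw : p.2 ≠ 0) :
    logDetV =ᶠ[𝓝 p] fun q =>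
      ((Real.log 4 - 2 * Real.log q.1.im : ℝ) : ℂ) - ((Real.log (normSq q.2) : ℝ) : ℂ) := by
  filter_upwards [eventually_im_ne_zero_and_snd_ne_zero hy hw] with q ⟨hqy, hqw⟩
  have hN : normSq q.2 ≠ 0 := (normSq_pos.2 hqw).ne'
  rw [logDetV, Real.log_div (by norm_num) (mul_ne_zero (pow_ne_zero 2 hqy) hN),
    Real.log_mul (pow_ne_zero 2 hqy) hN, Real.log_pow]
  push_cast
  ring

lemma wdb_logDetV (hy : p.1.im ≠ 0) (hw : p.2 ≠ 0) (i : Fin 2) :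
    wdb i logDetV p = if i = 0 then -I / p.1.im else -(starRingEnd ℂ p.2)⁻¹ := by
  have hφ := hasFDerivAt_comp_im (z := p.1) (hasDerivAt_log_four_sub hy)
  have hψ := hasFDerivAt_ofReal_log_normSq hw
  rw [(logDetV_eventuallyEq hy hw).wdb_eq, wdb_sub, wdb_comp_fst hφ.differentiableAt,
    wdb_comp_snd hψ.differentiableAt]
  · fin_cases i
    · rw [dzb_comp_im (hasDerivAt_log_four_sub hy)]
      simp only [Fin.zero_eta, Fin.isValue, ↓reduceIte, sub_zero]
      field_simp
    · simp [dzb_log_normSq hw]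
  · exact hφ.differentiableAt.comp p differentiableAt_fst
  · exact hψ.differentiableAt.comp p differentiableAt_snd

lemma wdb_zero_logDetV_eventuallyEq (hy : p.1.im ≠ 0) (hw : p.2 ≠ 0) :
    wdb 0 logDetV =ᶠ[𝓝 p] fun q => -I / q.1.im := by
  filter_upwards [eventually_im_ne_zero_and_snd_ne_zero hy hw] with q ⟨hqy, hqw⟩
  exact wdb_logDetV hqy hqw 0

lemma wdb_one_logDetV_eventuallyEq (hy : p.1.im ≠ 0) (hw : p.2 ≠ 0) :
    wdb 1 logDetV =ᶠ[𝓝 p] fun q => -(starRingEnd ℂ q.2)⁻¹ := by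
  filter_upwards [eventually_im_ne_zero_and_snd_ne_zero hy hw] with q ⟨hqy, hqw⟩
  exact wdb_logDetV hqy hqw 1

lemma wd_wdb_zero_logDetV (hy : p.1.im ≠ 0) (hw : p.2 ≠ 0) (i : Fin 2) :
    wd i (wdb 0 logDetV) p = if i = 0 then 1 / (2 * (p.1.im : ℂ) ^ 2) else 0 := by
  have hφ := hasFDerivAt_comp_im (z := p.1) (hasDerivAt_neg_I_div hy)
  rw [(wdb_zero_logDetV_eventuallyEq hy hw).wd_eq, wd_comp_fst hφ.differentiableAt,
    dz_comp_im (hasDerivAt_neg_I_div hy)]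
  congr 1
  field_simp
  rw [I_sq, neg_neg]

lemma wd_wdb_one_logDetV (hy : p.1.im ≠ 0) (hw : p.2 ≠ 0) (i : Fin 2) :
    wd i (wdb 1 logDetV) p = 0 := by
  have hg : DifferentiableAt ℂ (fun u : ℂ => -u⁻¹) (starRingEnd ℂ p.2) :=
    (differentiableAt_inv (by simpa using hw)).neg
  have hψ : DifferentiableAt ℝ (fun w => -(starRingEnd ℂ w)⁻¹) p.2 :=
    (hg.restrictScalars ℝ).comp p.2 conjCLE.differentiableAt
  rw [(wdb_one_logDetV_eventuallyEq hy hw).wd_eq, wd_comp_snd hψ,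
    dz_comp_conj (g := fun u => -u⁻¹) hg, ite_self]

end LogDet

/-- On `H×ℂ*`, the metric `ω₀` above satisfies
`det g₀ = 4/(y²|w|²)`, it is positive definite, and
`Ric(ω₀) = -√-1∂∂̄ log det g₀ = -(1/(2y²))√-1 dz∧dz̄` (all other Ricci coefficients
vanish). -/
theorem stmt10 (p : ℂ × ℂ) (hp : 0 < p.1.im) (hw : p.2 ≠ 0) :
    ((gV p).det = ((4 / (p.1.im ^ 2 * Complex.normSq p.2) : ℝ) : ℂ)) ∧
    (gV p).PosDef ∧
    (-wd 0 (wdb 0 (fun q => ((Real.log (4 / (q.1.im ^ 2 * Complex.normSq q.2)) : ℝ) : ℂ))) p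
        = -(1 / (2 * (p.1.im : ℂ) ^ 2))) ∧
    (-wd 0 (wdb 1 (fun q => ((Real.log (4 / (q.1.im ^ 2 * Complex.normSq q.2)) : ℝ) : ℂ))) p = 0) ∧
    (-wd 1 (wdb 0 (fun q => ((Real.log (4 / (q.1.im ^ 2 * Complex.normSq q.2)) : ℝ) : ℂ))) p = 0) ∧
    (-wd 1 (wdb 1 (fun q => ((Real.log (4 / (q.1.im ^ 2 * Complex.normSq q.2)) : ℝ) : ℂ))) p = 0) := by
  have hy := hp.ne'
  refine ⟨gV_det hy hw, gV_posDef hy hw, ?_, ?_, ?_, ?_⟩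
  · exact congrArg Neg.neg (wd_wdb_zero_logDetV hy hw 0)
  · exact neg_eq_zero.2 (wd_wdb_one_logDetV hy hw 0)
  · exact neg_eq_zero.2 (wd_wdb_zero_logDetV hy hw 1)
  · exact neg_eq_zero.2 (wd_wdb_one_logDetV hy hw 1)
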